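/- arXiv:2009.12600 — 2 statements merged into one kernel-verified Lean document; each statement's English description precedes it below -/
import Mathlib

section
/- Let M = ⟨S, A, T, s0⟩ be an nrMDP, λ : A × S → Z a labeling function, R = ⟨U, u0, Z, δ_u, δ_r, c⟩ a Mealy reward machine, and P = M ⊗_λ R their synchronized product. The extension of B to infinite histories (mapping s0 a0 s1 a1 ⋯ to (s0,u_0) a0 (s1,u_1) a1 ⋯ with u_0 = u0 and u_{i+1} = δ_u(u_i, λ(a_i, s_{i+1}))) is a measurable bijection between the space of infinite histories of M and the space of infinite histories of P, and for every strategy π for M with corresponding strategy π⊗ for P, the pushforward of the measure Pr^{M,π}_{s0} under this map equals Pr^{P,π⊗}_{(s0,u0)}. -/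
open MeasureTheory Filter

attribute [local instance] Classical.propDecidable

/-- A non-rewarding Markov decision process over finite state set `S` and
finite action set `A`. -/
structure NRMDP (S A : Type) [Fintype S] [Fintype A] where
  T : S → A → S → ℝ
  T_nonneg : ∀ s a s', 0 ≤ T s a s'
  T_le_one : ∀ s a s', T s a s' ≤ 1
  T_sum_one : ∀ s a, ∑ s', T s a s' = 1
  s0 : S

/-- A Mealy reward machine over the finite observation set `Z` with
distinguished observation `null`. -/
structure MRM (U Z : Type) [Fintype U] [Fintype Z] (null : Z) where
  u0 : U
  δu : U → Z → U
  δr : U → Z → ℝ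
  c : ℝ
  δu_null : ∀ u, δu u null = u
  δr_null : ∀ u, δr u null = c

variable {S A U Z St Ac : Type}

/-- `ValidFrom T s steps` : the alternating sequence starting at `s` whose
successive (action, next-state) steps are `steps` has positive transition
probability at every step. -/
def ValidFrom (T : St → Ac → St → ℝ) : St → List (Ac × St) → Prop
  | _, [] => True
  | s, step :: rest => 0 < T s step.1 step.2 ∧ ValidFrom T step.2 rest

/-- Transition function of the synchronized product `M ⊗_λ R`. -/
noncomputable def prodT (T : S → A → S → ℝ) (lab : A → S → Z) (δu : U → Z → U) :
    S × U → A → S × U → ℝ :=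
  fun p a q => if q.2 = δu p.2 (lab a q.1) then T p.1 a q.1 else 0

/-- The map `B` (on the step list of a history), lifting a history of `M`
to a history of the synchronized product by tracking the MRM node. -/
def liftHist (lab : A → S → Z) (δu : U → Z → U) : U → List (A × S) → List (A × (S × U))
  | _, [] => []
  | u, (a, s') :: rest =>
      (a, (s', δu u (lab a s'))) :: liftHist lab δu (δu u (lab a s')) rest

/-- Every trajectory space `ℕ → X` over a (finite) state or step space `X`
carries the product of the discrete σ-algebras. -/
instance trajMeasurableSpace (X : Type) : MeasurableSpace (ℕ → X) :=
  @MeasurableSpace.pi ℕ (fun _ => X) (fun _ => ⊤)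

/-- The cylinder of infinite trajectories extending the finite prefix `pre`. -/
def Cyl {X : Type} (pre : List X) : Set (ℕ → X) :=
  {ω | ∀ i : ℕ, i < pre.length → pre[i]? = some (ω i)}

/-- Auxiliary function: probability of a finite step sequence, given the
current state, the history so far (fed to the strategy) and the remaining
steps. -/
noncomputable def prefixProbAux (T : St → Ac → St → ℝ) (π : List (Ac × St) → Ac) :
    St → List (Ac × St) → List (Ac × St) → ℝ
  | _, _, [] => 1
  | s, past, (a, s') :: rest =>
      (if a = π past then T s a s' else 0) *
        prefixProbAux T π s' (past ++ [(a, s')]) rest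

/-- Probability, under strategy `π` from state `s0`, of the finite step
sequence `h`. -/
noncomputable def prefixProb (T : St → Ac → St → ℝ) (π : List (Ac × St) → Ac)
    (s0 : St) (h : List (Ac × St)) : ℝ :=
  prefixProbAux T π s0 [] h

/-- `IsInduced T π s0 μ` : `μ` is the probability measure on infinite
histories induced (via the Ionescu–Tulcea theorem) by playing strategy `π`
from `s0` in the MDP with transition function `T`; it is characterized by
its values on cylinders. -/
def IsInduced (T : St → Ac → St → ℝ) (π : List (Ac × St) → Ac) (s0 : St)
    (μ : MeasureTheory.Measure (ℕ → Ac × St)) : Prop :=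
  MeasureTheory.IsProbabilityMeasure μ ∧
    ∀ h : List (Ac × St), μ (Cyl h) = ENNReal.ofReal (prefixProb T π s0 h)

/-- The MRM node reached after `i` steps of the infinite history `ω`. -/
def nodeAt (lab : A → S → Z) (δu : U → Z → U) (u0 : U) (ω : ℕ → A × S) : ℕ → U
  | 0 => u0
  | i + 1 => δu (nodeAt lab δu u0 ω i) (lab (ω i).1 (ω i).2)

/-- The reward trace (under the MRM) of the infinite history `ω` of `M`. -/
noncomputable def rewAt (lab : A → S → Z) (δu : U → Z → U) (δr : U → Z → ℝ)
    (u0 : U) (ω : ℕ → A × S) (i : ℕ) : ℝ :=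
  δr (nodeAt lab δu u0 ω i) (lab (ω i).1 (ω i).2)

/-- The mean payoff `limsup_k (1/k) ∑_{i=1}^k r_i` of an infinite reward
sequence. -/
noncomputable def meanPayoff (r : ℕ → ℝ) : ℝ :=
  Filter.limsup (fun k : ℕ => (∑ i ∈ Finset.range k, r i) / k) Filter.atTop

/-- The product-MDP state occupied before step `i` along an infinite history
of the synchronized product (only its MRM-node component is recorded). -/
def prodNodeAt (u0 : U) (ω : ℕ → A × (S × U)) : ℕ → U
  | 0 => u0
  | i + 1 => (ω i).2.2

/-- The immediate rewards `R⊗` collected along an infinite history of the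
synchronized product. -/
noncomputable def prodRewAt (lab : A → S → Z) (δr : U → Z → ℝ) (u0 : U)
    (ω : ℕ → A × (S × U)) (i : ℕ) : ℝ :=
  δr (prodNodeAt u0 ω i) (lab (ω i).1 (ω i).2.1)

/-- The state occupied before step `i` along an infinite history. -/
def stAt {St Ac : Type} (s0 : St) (ω : ℕ → Ac × St) : ℕ → St
  | 0 => s0
  | i + 1 => (ω i).2

/-- An infinite history is valid when every step has positive transition
probability. -/
def InfValid {St Ac : Type} (T : St → Ac → St → ℝ) (s0 : St) (ω : ℕ → Ac × St) : Prop :=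
  ∀ i : ℕ, 0 < T (stAt s0 ω i) (ω i).1 (ω i).2

/-- The extension of the map `B` to infinite histories, tracking the MRM
node along the history. -/
def liftInf (lab : A → S → Z) (δu : U → Z → U) (u0 : U)
    (ω : ℕ → A × S) : ℕ → A × (S × U) :=
  fun i => ((ω i).1, ((ω i).2, nodeAt lab δu u0 ω (i + 1)))

section AuxLemmas

variable {S A U Z St Ac : Type}

/-- Projection from product steps back to `M`-steps. -/
def projStep {S A U : Type} (q : A × (S × U)) : A × S := (q.1, q.2.1)

/-- Node of the MRM after reading a finite history. -/
def nodeAfter (lab : A → S → Z) (δu : U → Z → U) : U → List (A × S) → U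
  | u, [] => u
  | u, p :: rest => nodeAfter lab δu (δu u (lab p.1 p.2)) rest

/-- State after a finite step list. -/
def stAfter {St Ac : Type} : St → List (Ac × St) → St
  | s, [] => s
  | _, p :: rest => stAfter p.2 rest

lemma liftHist_cons (lab : A → S → Z) (δu : U → Z → U) (u : U) (p : A × S)
    (rest : List (A × S)) :
    liftHist lab δu u (p :: rest)
      = (p.1, (p.2, δu u (lab p.1 p.2))) :: liftHist lab δu (δu u (lab p.1 p.2)) rest := by
  obtain ⟨a, s'⟩ := p; rfl

lemma prefixProbAux_cons {St Ac : Type} (T : St → Ac → St → ℝ) (π : List (Ac × St) → Ac)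
    (s : St) (past : List (Ac × St)) (p : Ac × St) (rest : List (Ac × St)) :
    prefixProbAux T π s past (p :: rest)
      = (if p.1 = π past then T s p.1 p.2 else 0) * prefixProbAux T π p.2 (past ++ [p]) rest := by
  obtain ⟨a, s'⟩ := p; rfl

lemma liftHist_length (lab : A → S → Z) (δu : U → Z → U) (u : U) (g : List (A × S)) :
    (liftHist lab δu u g).length = g.length := by
  induction g generalizing u with
  | nil => rfl
  | cons p rest ih => rw [liftHist_cons]; simp [ih]

lemma liftHist_append (lab : A → S → Z) (δu : U → Z → U) (u : U)
    (xs ys : List (A × S)) :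
    liftHist lab δu u (xs ++ ys)
      = liftHist lab δu u xs ++ liftHist lab δu (nodeAfter lab δu u xs) ys := by
  induction xs generalizing u with
  | nil => rfl
  | cons p rest ih => rw [List.cons_append, liftHist_cons, liftHist_cons, ih]; rfl

lemma liftHist_proj (lab : A → S → Z) (δu : U → Z → U) (u : U) (g : List (A × S)) :
    (liftHist lab δu u g).map projStep = g := by
  induction g generalizing u with
  | nil => rfl
  | cons p rest ih => rw [liftHist_cons, List.map_cons, ih]; rfl

lemma stAfter_append {St Ac : Type} (s : St) (xs ys : List (Ac × St)) :
    stAfter s (xs ++ ys) = stAfter (stAfter s xs) ys := by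
  induction xs generalizing s with
  | nil => rfl
  | cons p rest ih => simp [stAfter, ih]

lemma nodeAfter_append (lab : A → S → Z) (δu : U → Z → U) (u : U) (xs ys : List (A × S)) :
    nodeAfter lab δu u (xs ++ ys) = nodeAfter lab δu (nodeAfter lab δu u xs) ys := by
  induction xs generalizing u with
  | nil => rfl
  | cons p rest ih => simp [nodeAfter, ih]

lemma validFrom_append {St Ac : Type} (T : St → Ac → St → ℝ) (s : St)
    (xs ys : List (Ac × St)) :
    ValidFrom T s (xs ++ ys) ↔ ValidFrom T s xs ∧ ValidFrom T (stAfter s xs) ys := by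
  induction xs generalizing s with
  | nil => simp [ValidFrom, stAfter]
  | cons p rest ih => simp [ValidFrom, stAfter, ih, and_assoc]

/-- The length-`n` prefix of an infinite trajectory. -/
def prefList {X : Type} (ω : ℕ → X) (n : ℕ) : List X := List.ofFn (fun j : Fin n => ω j)

@[simp] lemma prefList_length {X : Type} (ω : ℕ → X) (n : ℕ) :
    (prefList ω n).length = n := by simp [prefList]

lemma prefList_succ {X : Type} (ω : ℕ → X) (n : ℕ) :
    prefList ω (n + 1) = prefList ω n ++ [ω n] := by
  rw [prefList, List.ofFn_succ', List.concat_eq_append]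
  rfl

lemma prefList_getElem?_lt {X : Type} (ω : ℕ → X) {n i : ℕ} (hi : i < n) :
    (prefList ω n)[i]? = some (ω i) := by
  simp [prefList, List.getElem?_ofFn, List.ofFnNthVal, hi]

lemma mem_Cyl_iff {X : Type} {h : List X} {ω : ℕ → X} :
    ω ∈ Cyl h ↔ h = prefList ω h.length := by
  constructor
  · intro hc
    refine List.ext_getElem? fun i => ?_
    rcases lt_or_ge i h.length with hi | hi
    · rw [hc i hi, prefList_getElem?_lt ω hi]
    · rw [List.getElem?_eq_none hi, List.getElem?_eq_none (by simpa using hi)]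
  · intro he i hi
    conv_lhs => rw [he]
    exact prefList_getElem?_lt ω hi

lemma mem_Cyl_prefList_iff {X : Type} (ω ω' : ℕ → X) (n : ℕ) :
    ω' ∈ Cyl (prefList ω n) ↔ ∀ i < n, ω' i = ω i := by
  unfold Cyl
  simp only [Set.mem_setOf_eq, prefList_length]
  constructor
  · intro hc i hi
    have := hc i hi
    rw [prefList_getElem?_lt ω hi] at this
    exact (Option.some_inj.mp this).symm
  · intro hc i hi
    rw [prefList_getElem?_lt ω hi, hc i hi]

lemma nodeAt_eq_nodeAfter (lab : A → S → Z) (δu : U → Z → U) (u0 : U)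
    (ω : ℕ → A × S) (n : ℕ) :
    nodeAt lab δu u0 ω n = nodeAfter lab δu u0 (prefList ω n) := by
  induction n with
  | zero => rfl
  | succ n ih => rw [prefList_succ, nodeAfter_append]; simp [nodeAt, nodeAfter, ih]

lemma liftHist_prefList (lab : A → S → Z) (δu : U → Z → U) (u0 : U)
    (ω : ℕ → A × S) (n : ℕ) :
    liftHist lab δu u0 (prefList ω n) = prefList (liftInf lab δu u0 ω) n := by
  induction n with
  | zero => rfl
  | succ n ih =>
    rw [prefList_succ, liftHist_append, ih, prefList_succ (liftInf lab δu u0 ω) n]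
    congr 1
    rw [liftHist_cons]
    simp only [liftHist]
    congr 1
    show ((ω n).1, ((ω n).2, δu (nodeAfter lab δu u0 (prefList ω n)) (lab (ω n).1 (ω n).2)))
        = liftInf lab δu u0 ω n
    rw [← nodeAt_eq_nodeAfter]
    rfl

lemma map_projStep_prefList (lab : A → S → Z) (δu : U → Z → U) (u0 : U)
    (ω : ℕ → A × S) (n : ℕ) :
    (prefList (liftInf lab δu u0 ω) n).map projStep = prefList ω n := by
  simp only [prefList, List.map_ofFn]
  rfl

lemma liftInf_preimage_Cyl_lift (lab : A → S → Z) (δu : U → Z → U) (u0 : U)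
    (g : List (A × S)) :
    liftInf lab δu u0 ⁻¹' Cyl (liftHist lab δu u0 g) = Cyl g := by
  ext ω
  simp only [Set.mem_preimage]
  rw [mem_Cyl_iff, mem_Cyl_iff, liftHist_length]
  constructor
  · intro he
    have h2 := congrArg (List.map projStep) he
    rw [liftHist_proj, map_projStep_prefList] at h2
    exact h2
  · intro he
    conv_lhs => rw [he]
    rw [liftHist_prefList]

lemma liftInf_preimage_Cyl_empty (lab : A → S → Z) (δu : U → Z → U) (u0 : U)
    (h : List (A × (S × U)))
    (hne : liftHist lab δu u0 (h.map projStep) ≠ h) :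
    liftInf lab δu u0 ⁻¹' Cyl h = ∅ := by
  ext ω
  simp only [Set.mem_preimage, Set.mem_empty_iff_false, iff_false]
  intro hc
  apply hne
  have he := mem_Cyl_iff.mp hc
  have hp : h.map projStep = prefList ω h.length := by
    conv_lhs => rw [he]
    rw [map_projStep_prefList]
  rw [hp, liftHist_prefList, ← he]

lemma prodProb_inconsistent (T : S → A → S → ℝ) (lab : A → S → Z) (δu : U → Z → U)
    (πP : List (A × (S × U)) → A) :
    ∀ (h : List (A × (S × U))) (p : S × U) (past : List (A × (S × U))),
      liftHist lab δu p.2 (h.map projStep) ≠ h →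
      prefixProbAux (prodT T lab δu) πP p past h = 0 := by
  intro h
  induction h with
  | nil => intro p past hne; exact absurd rfl hne
  | cons q rest ih =>
    intro p past hne
    rw [prefixProbAux_cons]
    by_cases hq : q.2.2 = δu p.2 (lab q.1 q.2.1)
    · have htail : liftHist lab δu q.2.2 (rest.map projStep) ≠ rest := by
        intro hcontra
        apply hne
        rw [List.map_cons, liftHist_cons]
        show ((q.1, (q.2.1, δu p.2 (lab q.1 q.2.1))) ::
          liftHist lab δu (δu p.2 (lab q.1 q.2.1)) (rest.map projStep)) = q :: rest
        rw [← hq, hcontra]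
      rw [ih q.2 (past ++ [q]) htail, mul_zero]
    · have h0 : prodT T lab δu p q.1 q.2 = 0 := if_neg hq
      rw [h0]
      simp

lemma prodProb_lift (T : S → A → S → ℝ) (hT : ∀ s a s', 0 ≤ T s a s')
    (lab : A → S → Z) (δu : U → Z → U) (s0 : S) (u0 : U)
    (π : List (A × S) → A) (πP : List (A × (S × U)) → A)
    (hcorr : ∀ h, ValidFrom T s0 h → πP (liftHist lab δu u0 h) = π h) :
    ∀ (rest g : List (A × S)), ValidFrom T s0 g →
      prefixProbAux (prodT T lab δu) πP (stAfter s0 g, nodeAfter lab δu u0 g)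
        (liftHist lab δu u0 g) (liftHist lab δu (nodeAfter lab δu u0 g) rest)
      = prefixProbAux T π (stAfter s0 g) g rest := by
  intro rest
  induction rest with
  | nil => intro g hg; rfl
  | cons p rest ih =>
    intro g hg
    obtain ⟨a, s'⟩ := p
    rw [liftHist_cons, prefixProbAux_cons, prefixProbAux_cons]
    simp only
    rw [hcorr g hg]
    have hπ : prodT T lab δu (stAfter s0 g, nodeAfter lab δu u0 g) a
        (s', δu (nodeAfter lab δu u0 g) (lab a s')) = T (stAfter s0 g) a s' := if_pos rfl
    rw [hπ]
    by_cases hpos : 0 < T (stAfter s0 g) a s'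
    · have hg' : ValidFrom T s0 (g ++ [(a, s')]) :=
        (validFrom_append T s0 g [(a, s')]).mpr ⟨hg, hpos, trivial⟩
      have hrec := ih (g ++ [(a, s')]) hg'
      rw [stAfter_append, nodeAfter_append, liftHist_append] at hrec
      simp only [stAfter, nodeAfter, liftHist] at hrec
      rw [hrec]
    · have h0 : T (stAfter s0 g) a s' = 0 := le_antisymm (not_lt.mp hpos) (hT _ _ _)
      rw [h0]
      simp

lemma prodProb_lift' (T : S → A → S → ℝ) (hT : ∀ s a s', 0 ≤ T s a s')
    (lab : A → S → Z) (δu : U → Z → U) (s0 : S) (u0 : U)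
    (π : List (A × S) → A) (πP : List (A × (S × U)) → A)
    (hcorr : ∀ h, ValidFrom T s0 h → πP (liftHist lab δu u0 h) = π h)
    (g : List (A × S)) :
    prefixProb (prodT T lab δu) πP (s0, u0) (liftHist lab δu u0 g)
      = prefixProb T π s0 g :=
  prodProb_lift T hT lab δu s0 u0 π πP hcorr g [] trivial

lemma nodeAt_congr (lab : A → S → Z) (δu : U → Z → U) (u0 : U)
    (ω ω' : ℕ → A × S) (n : ℕ) (hag : ∀ j < n, ω j = ω' j) :
    nodeAt lab δu u0 ω n = nodeAt lab δu u0 ω' n := by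
  induction n with
  | zero => rfl
  | succ n ih =>
    simp only [nodeAt]
    rw [ih (fun j hj => hag j (hj.trans n.lt_succ_self)), hag n n.lt_succ_self]

lemma liftInf_apply_congr (lab : A → S → Z) (δu : U → Z → U) (u0 : U)
    (ω ω' : ℕ → A × S) (i : ℕ) (hag : ∀ j ≤ i, ω j = ω' j) :
    liftInf lab δu u0 ω i = liftInf lab δu u0 ω' i := by
  unfold liftInf
  rw [hag i le_rfl,
    nodeAt_congr lab δu u0 ω ω' (i + 1) (fun j hj => hag j (Nat.lt_succ_iff.mp hj))]

lemma liftInf_measurable [Finite A] [Finite S] [Finite U]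
    (lab : A → S → Z) (δu : U → Z → U) (u0 : U) :
    Measurable (liftInf lab δu u0) := by
  letI : MeasurableSpace (A × S) := ⊤
  letI : MeasurableSpace (A × (S × U)) := ⊤
  apply measurable_pi_lambda
  intro i
  have hr : Measurable (fun ω : ℕ → A × S => (fun j : Fin (i + 1) => ω j)) :=
    measurable_pi_lambda _ fun j => measurable_pi_apply _
  have key : (fun ω : ℕ → A × S => liftInf lab δu u0 ω i)
      = (fun v : Fin (i + 1) → A × S =>
          liftInf lab δu u0
            (fun j => if h : j < i + 1 then v ⟨j, h⟩ else v ⟨i, i.lt_succ_self⟩) i)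
        ∘ (fun ω : ℕ → A × S => (fun j : Fin (i + 1) => ω j)) := by
    funext ω
    simp only [Function.comp_apply]
    exact (liftInf_apply_congr lab δu u0 _ ω i
      (fun j hj => dif_pos (Nat.lt_succ_of_le hj))).symm
  rw [key]
  haveI : MeasurableSingletonClass (A × S) :=
    ⟨fun _ => MeasurableSpace.measurableSet_top⟩
  haveI : MeasurableSingletonClass (A × (S × U)) :=
    ⟨fun _ => MeasurableSpace.measurableSet_top⟩
  exact Measurable.comp Measurable.of_discrete hr

lemma measurableSet_Cyl {X : Type} (h : List X) :
    MeasurableSet[trajMeasurableSpace X] (Cyl h) := by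
  letI : MeasurableSpace X := ⊤
  have heq : Cyl h
      = ⋂ i ∈ Set.Iio h.length, (fun ω : ℕ → X => ω i) ⁻¹' {x | h[i]? = some x} := by
    ext ω; simp [Cyl]
  rw [heq]
  exact MeasurableSet.biInter (Set.to_countable _)
    fun i _ => measurable_pi_apply i MeasurableSpace.measurableSet_top

/-- The collection of cylinder sets. -/
def CylSets (X : Type) : Set (Set (ℕ → X)) := {s | ∃ h : List X, s = Cyl h}

lemma traj_generateFrom (X : Type) [Finite X] :
    (trajMeasurableSpace X) = MeasurableSpace.generateFrom (CylSets X) := by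
  letI : MeasurableSpace X := ⊤
  refine le_antisymm ?_ (MeasurableSpace.generateFrom_le ?_)
  · show (⨆ i : ℕ, MeasurableSpace.comap (fun ω : ℕ → X => ω i) ⊤) ≤ _
    refine iSup_le fun i => ?_
    intro s hs
    obtain ⟨t, -, rfl⟩ := hs
    have heq : (fun ω : ℕ → X => ω i) ⁻¹' t
        = ⋃ x ∈ t, ⋃ h ∈ {h : List X | h.length = i + 1 ∧ h[i]? = some x}, Cyl h := by
      ext ω
      simp only [Set.mem_preimage, Set.mem_iUnion, Set.mem_setOf_eq, exists_prop]
      constructor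
      · intro hω
        refine ⟨ω i, hω, prefList ω (i + 1), ⟨by simp, ?_⟩, ?_⟩
        · exact prefList_getElem?_lt ω i.lt_succ_self
        · rw [mem_Cyl_iff, prefList_length]
      · rintro ⟨x, hx, h, ⟨hlen, hget⟩, hmem⟩
        have h2 := hmem i (by rw [hlen]; exact i.lt_succ_self)
        rw [hget] at h2
        rw [Option.some_inj.mp h2] at hx
        exact hx
    rw [heq]
    exact MeasurableSet.biUnion (Set.to_countable _) fun x _ =>
      MeasurableSet.biUnion (Set.to_countable _) fun h _ =>
        MeasurableSpace.measurableSet_generateFrom ⟨h, rfl⟩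
  · rintro s ⟨h, rfl⟩
    exact measurableSet_Cyl h

lemma cyl_prefList_subset {X : Type} (ω : ℕ → X) {m n : ℕ} (hmn : m ≤ n) :
    Cyl (prefList ω n) ⊆ Cyl (prefList ω m) := by
  intro ω' hmem
  have h1 := (mem_Cyl_prefList_iff ω ω' n).mp hmem
  exact (mem_Cyl_prefList_iff ω ω' m).mpr fun i hi => h1 i (hi.trans_le hmn)

lemma isPiSystem_cylSets (X : Type) : IsPiSystem (CylSets X) := by
  rintro s ⟨h₁, rfl⟩ t ⟨h₂, rfl⟩ hne
  obtain ⟨ω, hω₁, hω₂⟩ := hne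
  have e₁ := mem_Cyl_iff.mp hω₁
  have e₂ := mem_Cyl_iff.mp hω₂
  rcases le_total h₁.length h₂.length with hle | hle
  · have heq : Cyl h₁ ∩ Cyl h₂ = Cyl h₂ := by
      apply Set.inter_eq_self_of_subset_right
      rw [e₁, e₂]
      exact cyl_prefList_subset ω hle
    rw [heq]; exact ⟨h₂, rfl⟩
  · have heq : Cyl h₁ ∩ Cyl h₂ = Cyl h₁ := by
      apply Set.inter_eq_self_of_subset_left
      rw [e₁, e₂]
      exact cyl_prefList_subset ω hle
    rw [heq]; exact ⟨h₁, rfl⟩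

lemma stAt_liftInf (lab : A → S → Z) (δu : U → Z → U) (s0 : S) (u0 : U)
    (ω : ℕ → A × S) (i : ℕ) :
    stAt (s0, u0) (liftInf lab δu u0 ω) i = (stAt s0 ω i, nodeAt lab δu u0 ω i) := by
  cases i with
  | zero => rfl
  | succ i => rfl

end AuxLemmas

/-- The extension of `B` to infinite histories is a
measurable bijection from the space of infinite histories of `M` onto the
space of infinite histories of `P = M ⊗_λ R`, and for every strategy `π`
for `M` with corresponding strategy `π⊗` for `P`, it pushes the induced
measure `Pr^{M,π}_{s0}` forward to `Pr^{P,π⊗}_{(s0,u0)}`. -/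
theorem liftInf_measurable_bijective_map
    [Fintype S] [Fintype A] [Fintype U] [Fintype Z]
    (M : NRMDP S A) (null : Z) (lab : A → S → Z) (R : MRM U Z null)
    (π : List (A × S) → A) (πP : List (A × (S × U)) → A)
    (hcorr : ∀ h : List (A × S), ValidFrom M.T M.s0 h →
      πP (liftHist lab R.δu R.u0 h) = π h)
    (μM : MeasureTheory.Measure (ℕ → A × S))
    (μP : MeasureTheory.Measure (ℕ → A × (S × U)))
    (hμM : IsInduced M.T π M.s0 μM)
    (hμP : IsInduced (prodT M.T lab R.δu) πP ((M.s0 : S), (R.u0 : U)) μP) :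
    Measurable (liftInf lab R.δu R.u0) ∧
    Set.BijOn (liftInf lab R.δu R.u0)
      {ω : ℕ → A × S | InfValid M.T M.s0 ω}
      {ω : ℕ → A × (S × U) | InfValid (prodT M.T lab R.δu) ((M.s0 : S), (R.u0 : U)) ω} ∧
    μM.map (liftInf lab R.δu R.u0) = μP := by
  obtain ⟨hPM, hM⟩ := hμM
  obtain ⟨hPP, hP⟩ := hμP
  have hmeas : Measurable (liftInf lab R.δu R.u0) := liftInf_measurable lab R.δu R.u0
  have hval : ∀ (s : S) (u : U) (a : A) (s' : S),
      prodT M.T lab R.δu (s, u) a (s', R.δu u (lab a s')) = M.T s a s' :=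
    fun _ _ _ _ => if_pos rfl
  refine ⟨hmeas, ⟨?_, ?_, ?_⟩, ?_⟩
  · -- MapsTo
    intro ω hω
    simp only [Set.mem_setOf_eq] at hω ⊢
    intro i
    show 0 < prodT M.T lab R.δu (stAt (M.s0, R.u0) (liftInf lab R.δu R.u0 ω) i)
        (liftInf lab R.δu R.u0 ω i).1 (liftInf lab R.δu R.u0 ω i).2
    rw [stAt_liftInf]
    show 0 < prodT M.T lab R.δu (stAt M.s0 ω i, nodeAt lab R.δu R.u0 ω i)
        (ω i).1 ((ω i).2, R.δu (nodeAt lab R.δu R.u0 ω i) (lab (ω i).1 (ω i).2))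
    rw [hval]
    exact hω i
  · -- InjOn
    intro ω₁ _ ω₂ _ he
    funext i
    have h1 := congrFun he i
    have h2 : ω₁ i = ((liftInf lab R.δu R.u0 ω₁ i).1, (liftInf lab R.δu R.u0 ω₁ i).2.1) := rfl
    rw [h2, h1]
    rfl
  · -- SurjOn
    intro ω' hω'
    simp only [Set.mem_setOf_eq] at hω'
    set ω : ℕ → A × S := fun i => ((ω' i).1, (ω' i).2.1) with hωdef
    have hst : ∀ i, stAt (M.s0, R.u0) ω' i = (stAt M.s0 ω i, nodeAt lab R.δu R.u0 ω i) := by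
      intro i
      induction i with
      | zero => rfl
      | succ i ih =>
        have hv := hω' i
        rw [ih] at hv
        have hcond : (ω' i).2.2
            = R.δu (nodeAt lab R.δu R.u0 ω i) (lab (ω' i).1 (ω' i).2.1) := by
          by_contra hc
          simp only [prodT] at hv
          rw [if_neg hc] at hv
          exact lt_irrefl 0 hv
        show (ω' i).2 = (stAt M.s0 ω (i + 1), nodeAt lab R.δu R.u0 ω (i + 1))
        exact Prod.ext rfl hcond
    have hcond : ∀ i, (ω' i).2.2
        = R.δu (nodeAt lab R.δu R.u0 ω i) (lab (ω' i).1 (ω' i).2.1) := by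
      intro i
      have hv := hω' i
      rw [hst i] at hv
      by_contra hc
      simp only [prodT] at hv
      rw [if_neg hc] at hv
      exact lt_irrefl 0 hv
    have hmemω : InfValid M.T M.s0 ω := by
      intro i
      have hv := hω' i
      rw [hst i] at hv
      simp only [prodT] at hv
      rw [if_pos (hcond i)] at hv
      exact hv
    refine ⟨ω, hmemω, ?_⟩
    funext i
    show ((ω i).1, ((ω i).2, nodeAt lab R.δu R.u0 ω (i + 1))) = ω' i
    have hnode : nodeAt lab R.δu R.u0 ω (i + 1) = (ω' i).2.2 := (hcond i).symm
    rw [hnode]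
  · -- pushforward measure
    haveI := hPM
    haveI := hPP
    haveI : IsProbabilityMeasure (μM.map (liftInf lab R.δu R.u0)) :=
      Measure.isProbabilityMeasure_map hmeas.aemeasurable
    refine ext_of_generate_finite (CylSets (A × (S × U))) (traj_generateFrom _)
      (isPiSystem_cylSets _) ?_ ?_
    · rintro s ⟨h, rfl⟩
      rw [Measure.map_apply hmeas (measurableSet_Cyl h), hP h]
      by_cases hc : liftHist lab R.δu R.u0 (h.map projStep) = h
      · rw [← hc, liftInf_preimage_Cyl_lift, hM,
          prodProb_lift' M.T M.T_nonneg lab R.δu M.s0 R.u0 π πP hcorr]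
      · rw [liftInf_preimage_Cyl_empty lab R.δu R.u0 h hc, measure_empty,
          show prefixProb (prodT M.T lab R.δu) πP (M.s0, R.u0) h = 0 from
            prodProb_inconsistent M.T lab R.δu πP h (M.s0, R.u0) [] hc]
        simp
    · simp [measure_univ]
end

section
/- Let M = ⟨S, A, T, s0⟩ be an nrMDP, λ : A × S → Z a labeling function, and R = ⟨U, u0, Z, δ_u, δ_r, c⟩ a Mealy reward machine. Let M↻ denote M extended with the reset action ↻ (actions A ∪ {↻}, T(s, ↻, s0) = 1 for all s ∈ S), where every ↻-step is assigned reward c_↻ and non-reset steps are rewarded by R as before. Then for every strategy π for M↻ and the corresponding strategy π^{⊗↻} of the homing synchronized product P↻ = M ⊗↻_λ R, the expected mean payoffs coincide: E^{M↻,π}_{s0}(MP(R)) = E^{P↻,π^{⊗↻}}_{(s0,u0)}(MP(R^{⊗↻})). -/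
open MeasureTheory Filter

attribute [local instance] Classical.propDecidable

variable {S A U Z St Ac : Type}

/-- Transition function of `M↻`: `M` extended with the reset action
(`Sum.inr ()`), which returns to the initial state with probability 1. -/
noncomputable def resetT (T : S → A → S → ℝ) (s0 : S) : S → A ⊕ Unit → S → ℝ
  | s, Sum.inl a, s' => T s a s'
  | _, Sum.inr _, s' => if s' = s0 then 1 else 0

/-- Transition function of the homing synchronized product `P↻ = M ⊗↻_λ R`. -/
noncomputable def homT (T : S → A → S → ℝ) (lab : A → S → Z) (δu : U → Z → U)
    (s0 : S) (u0 : U) : S × U → A ⊕ Unit → S × U → ℝ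
  | p, Sum.inl a, q => if q.2 = δu p.2 (lab a q.1) then T p.1 a q.1 else 0
  | _, Sum.inr _, q => if q = (s0, u0) then 1 else 0

/-- The MRM node reached after `i` steps of an infinite history of `M↻`
(a reset step returns the machine to its start node). -/
def nodeAtReset (lab : A → S → Z) (δu : U → Z → U) (u0 : U)
    (ω : ℕ → (A ⊕ Unit) × S) : ℕ → U
  | 0 => u0
  | i + 1 =>
      match (ω i).1 with
      | Sum.inl a => δu (nodeAtReset lab δu u0 ω i) (lab a (ω i).2)
      | Sum.inr _ => u0

/-- The reward trace of an infinite history of `M↻`: rewards of `R` on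
non-reset steps and the reset cost `creset` on reset steps. -/
noncomputable def rewAtReset (lab : A → S → Z) (δu : U → Z → U) (δr : U → Z → ℝ)
    (u0 : U) (creset : ℝ) (ω : ℕ → (A ⊕ Unit) × S) (i : ℕ) : ℝ :=
  match (ω i).1 with
  | Sum.inl a => δr (nodeAtReset lab δu u0 ω i) (lab a (ω i).2)
  | Sum.inr _ => creset

/-- The history bijection `B` for `M↻`, lifting (step lists of) histories
of `M↻` to histories of the homing synchronized product. -/
def liftHistReset (lab : A → S → Z) (δu : U → Z → U) (u0 : U) :
    U → List ((A ⊕ Unit) × S) → List ((A ⊕ Unit) × (S × U))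
  | _, [] => []
  | u, (Sum.inl a, s') :: rest =>
      (Sum.inl a, (s', δu u (lab a s'))) ::
        liftHistReset lab δu u0 (δu u (lab a s')) rest
  | _, (Sum.inr x, s') :: rest =>
      (Sum.inr x, (s', u0)) :: liftHistReset lab δu u0 u0 rest

/-- The product-MDP node occupied before step `i` along an infinite history
of the homing synchronized product. -/
def homNodeAt (u0 : U) (ω : ℕ → (A ⊕ Unit) × (S × U)) : ℕ → U
  | 0 => u0
  | i + 1 => (ω i).2.2

/-- The immediate rewards `R^{⊗↻}` collected along an infinite history of
the homing synchronized product. -/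
noncomputable def homRewAt (lab : A → S → Z) (δr : U → Z → ℝ) (u0 : U)
    (creset : ℝ) (ω : ℕ → (A ⊕ Unit) × (S × U)) (i : ℕ) : ℝ :=
  match (ω i).1 with
  | Sum.inl a => δr (homNodeAt u0 ω i) (lab a (ω i).2.1)
  | Sum.inr _ => creset

/-!
Lift an infinite history of `M↻` to one of `P↻` by tracking the reward-machine node, which is
reset to `u₀` by `↻`. The lift is measurable and preserves the reward trace step by step,
so it suffices that the measure induced on `P↻` is the push-forward of the one on `M↻`. Both
are determined by their values on cylinders. A cylinder of `P↻` whose node component is not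
the tracked one has probability zero, since the node is updated deterministically; on the
lift of a history of `M↻` the product has the same transition probabilities and, as long as
the history has positive probability, `π^{⊗↻}` chooses the same actions as `π`, so both
cylinders have the same probability.
-/

section Trajectories

variable {X : Type}

def trajPrefix (ω : ℕ → X) (n : ℕ) : List X := (List.range n).map ω

@[simp] lemma length_trajPrefix (ω : ℕ → X) (n : ℕ) : (trajPrefix ω n).length = n := by
  simp [trajPrefix]

lemma getElem?_trajPrefix (ω : ℕ → X) {n i : ℕ} (hi : i < n) :
    (trajPrefix ω n)[i]? = some (ω i) := by
  simp [trajPrefix, hi]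

lemma cyl_nil : Cyl ([] : List X) = Set.univ := by
  simp [Cyl]

lemma mem_cyl_iff {ω : ℕ → X} {l : List X} : ω ∈ Cyl l ↔ trajPrefix ω l.length = l := by
  refine ⟨fun hω => List.ext_getElem? fun i => ?_,
    fun hω i hi => hω ▸ getElem?_trajPrefix ω hi⟩
  rcases lt_or_ge i l.length with hi | hi
  · rw [getElem?_trajPrefix ω hi, hω i hi]
  · rw [List.getElem?_eq_none (by simpa using hi), List.getElem?_eq_none hi]

lemma measurableSet_cyl (l : List X) : MeasurableSet (Cyl l) := by
  let : MeasurableSpace X := ⊤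
  have hCyl : Cyl l = ⋂ i : Fin l.length, (fun ω : ℕ → X => ω i) ⁻¹' {l[i]} := by
    ext ω
    simp only [Cyl, Set.mem_ofPred_eq, Set.mem_iInter, Set.mem_preimage, Set.mem_singleton_iff,
      Fin.forall_iff, Fin.getElem_fin]
    refine forall₂_congr fun i hi => ?_
    rw [List.getElem?_eq_getElem hi, Option.some_inj, eq_comm]
  rw [hCyl]
  exact .iInter fun i => measurable_pi_apply _ trivial

lemma cyl_subset_cyl_of_length_le {l l' : List X} (hle : l.length ≤ l'.length)
    (hne : (Cyl l ∩ Cyl l').Nonempty) : Cyl l' ⊆ Cyl l := by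
  obtain ⟨ω, hω, hω'⟩ := hne
  intro θ hθ i hi
  rw [hω i hi, ← hω' i (by omega), hθ i (by omega)]

lemma isPiSystem_cyl : IsPiSystem (Set.range (Cyl (X := X))) := by
  rintro _ ⟨l, rfl⟩ _ ⟨l', rfl⟩ hne
  rcases le_total l.length l'.length with hle | hle
  · exact ⟨l', (Set.inter_eq_right.2 (cyl_subset_cyl_of_length_le hle hne)).symm⟩
  · rw [Set.inter_comm] at hne ⊢
    exact ⟨l, (Set.inter_eq_right.2 (cyl_subset_cyl_of_length_le hle hne)).symm⟩

lemma generateFrom_cyl [Countable X] :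
    MeasurableSpace.generateFrom (Set.range (Cyl (X := X))) = trajMeasurableSpace X := by
  let : MeasurableSpace X := ⊤
  refine le_antisymm (MeasurableSpace.generateFrom_le ?_) ?_
  · rintro _ ⟨l, rfl⟩
    exact measurableSet_cyl l
  · refine iSup_le fun i => ?_
    rw [← measurable_iff_comap_le]
    refine @measurable_to_countable' X (ℕ → X) ⊤ _ (.generateFrom _) _ fun x => ?_
    have hfiber :
        (fun ω : ℕ → X => ω i) ⁻¹' {x} = ⋃ (l : List X) (_ : l[i]? = some x), Cyl l := by
      ext ω
      simp only [Set.mem_preimage, Set.mem_singleton_iff, Set.mem_iUnion]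
      refine ⟨fun hx => ⟨trajPrefix ω (i + 1), by simp [trajPrefix, hx], ?_⟩, ?_⟩
      · exact mem_cyl_iff.2 (by simp)
      · rintro ⟨l, hl, hω⟩
        have hi : i < l.length := by
          by_contra! h
          simp [List.getElem?_eq_none h] at hl
        simpa [hl] using (hω i hi).symm
    rw [hfiber]
    exact .iUnion fun l => .iUnion fun _ => MeasurableSpace.measurableSet_generateFrom ⟨l, rfl⟩

lemma ext_of_cyl [Countable X] {μ ν : Measure (ℕ → X)} [IsFiniteMeasure μ]
    (h : ∀ l, μ (Cyl l) = ν (Cyl l)) : μ = ν :=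
  ext_of_generate_finite _ generateFrom_cyl.symm isPiSystem_cyl
    (by rintro _ ⟨l, rfl⟩; exact h l) (by simpa [cyl_nil] using h [])

lemma measurable_of_dependsOn [Countable X] {β : Type*} [MeasurableSpace β]
    {F : (ℕ → X) → β} {n : ℕ} (hF : DependsOn F (Set.Iio n)) : Measurable F := by
  let : MeasurableSpace X := ⊤
  have : MeasurableSingletonClass X := ⟨fun _ => trivial⟩
  cases isEmpty_or_nonempty (ℕ → X) with
  | inl _ => exact Subsingleton.measurable
  | inr hne =>
    have : Nonempty β := hne.map F
    obtain ⟨g, rfl⟩ := dependsOn_iff_exists_comp.1 hF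
    exact (measurable_of_countable g).comp
      (measurable_pi_lambda _ fun i => measurable_pi_apply _)

end Trajectories

lemma measurable_meanPayoff {α : Type*} [MeasurableSpace α] {r : α → ℕ → ℝ}
    (hr : ∀ i, Measurable fun a => r a i) : Measurable fun a => meanPayoff (r a) :=
  .limsup fun _ => (Finset.measurable_sum _ fun i _ => hr i).div_const _

section HomingProduct

variable (lab : A → S → Z) (δu : U → Z → U) (u0 : U)

def nextNode : U → A ⊕ Unit → S → U
  | u, Sum.inl a, s' => δu u (lab a s')
  | _, Sum.inr _, _ => u0

lemma liftHistReset_cons (u : U) (x : (A ⊕ Unit) × S) (l : List ((A ⊕ Unit) × S)) :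
    liftHistReset lab δu u0 u (x :: l) =
      (x.1, (x.2, nextNode lab δu u0 u x.1 x.2)) ::
        liftHistReset lab δu u0 (nextNode lab δu u0 u x.1 x.2) l := by
  obtain ⟨_ | _, _⟩ := x <;> rfl

lemma map_liftHistReset (u : U) (l : List ((A ⊕ Unit) × S)) :
    (liftHistReset lab δu u0 u l).map (Prod.map id Prod.fst) = l := by
  induction l generalizing u with
  | nil => rfl
  | cons x l ih => simp [liftHistReset_cons, ih]

lemma length_liftHistReset (u : U) (l : List ((A ⊕ Unit) × S)) :
    (liftHistReset lab δu u0 u l).length = l.length := by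
  simpa using congrArg List.length (map_liftHistReset lab δu u0 u l)

lemma liftHistReset_injective (u : U) : Function.Injective (liftHistReset lab δu u0 u) :=
  Function.LeftInverse.injective (map_liftHistReset lab δu u0 u)

lemma nodeAtReset_succ (ω : ℕ → (A ⊕ Unit) × S) (i : ℕ) :
    nodeAtReset lab δu u0 ω (i + 1) =
      nextNode lab δu u0 (nodeAtReset lab δu u0 ω i) (ω i).1 (ω i).2 := by
  rw [nodeAtReset]
  cases (ω i).1 <;> rfl

def liftTraj (ω : ℕ → (A ⊕ Unit) × S) : ℕ → (A ⊕ Unit) × (S × U) :=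
  fun i => ((ω i).1, ((ω i).2, nodeAtReset lab δu u0 ω (i + 1)))

lemma homRewAt_liftTraj (δr : U → Z → ℝ) (c : ℝ) (ω : ℕ → (A ⊕ Unit) × S) :
    homRewAt lab δr u0 c (liftTraj lab δu u0 ω) = rewAtReset lab δu δr u0 c ω := by
  ext i
  have hnode : homNodeAt u0 (liftTraj lab δu u0 ω) i = nodeAtReset lab δu u0 ω i := by
    cases i <;> rfl
  simp only [homRewAt, rewAtReset, liftTraj, hnode]

lemma liftHistReset_trajPrefix (ω : ℕ → (A ⊕ Unit) × S) (n : ℕ) :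
    liftHistReset lab δu u0 u0 (trajPrefix ω n) = trajPrefix (liftTraj lab δu u0 ω) n := by
  suffices ∀ k, liftHistReset lab δu u0 (nodeAtReset lab δu u0 ω k)
      ((List.range' k n).map ω) = (List.range' k n).map (liftTraj lab δu u0 ω) by
    simpa [trajPrefix, List.range_eq_range', nodeAtReset] using this 0
  induction n with
  | zero => exact fun _ => rfl
  | succ n ih =>
    intro k
    rw [List.range'_succ, List.map_cons, List.map_cons, liftHistReset_cons, ← nodeAtReset_succ,
      ih]
    rfl

lemma preimage_liftTraj_cyl_liftHistReset (l : List ((A ⊕ Unit) × S)) :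
    liftTraj lab δu u0 ⁻¹' Cyl (liftHistReset lab δu u0 u0 l) = Cyl l := by
  ext ω
  rw [Set.mem_preimage, mem_cyl_iff, mem_cyl_iff, ← liftHistReset_trajPrefix,
    length_liftHistReset, (liftHistReset_injective lab δu u0 u0).eq_iff]

lemma preimage_liftTraj_cyl_of_notMem_range {l' : List ((A ⊕ Unit) × (S × U))}
    (hl' : l' ∉ Set.range (liftHistReset lab δu u0 u0)) :
    liftTraj lab δu u0 ⁻¹' Cyl l' = ∅ := by
  refine Set.eq_empty_of_forall_notMem fun ω hω => hl' ?_
  rw [Set.mem_preimage, mem_cyl_iff, ← liftHistReset_trajPrefix] at hω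
  exact ⟨_, hω⟩

lemma dependsOn_nodeAtReset (n : ℕ) :
    DependsOn (fun ω => nodeAtReset lab δu u0 ω n) (Set.Iio n) := by
  induction n with
  | zero => exact fun _ _ _ => rfl
  | succ n ih =>
    intro ω ω' h
    simp only [nodeAtReset_succ, ih fun i hi => h i (Nat.lt_succ_of_lt hi),
      h n (Nat.lt_succ_self n)]

lemma measurable_liftTraj [Countable A] [Countable S] : Measurable (liftTraj lab δu u0) := by
  let : MeasurableSpace ((A ⊕ Unit) × (S × U)) := ⊤
  refine measurable_pi_iff.2 fun i => measurable_of_dependsOn (n := i + 1) fun ω ω' h => ?_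
  simp only [liftTraj, h i (Nat.lt_succ_self i), dependsOn_nodeAtReset lab δu u0 (i + 1) h]

lemma measurable_homRewAt [Countable A] [Countable S] [Countable U] (δr : U → Z → ℝ)
    (c : ℝ) (i : ℕ) : Measurable fun ω => homRewAt lab δr u0 c ω i := by
  refine measurable_of_dependsOn (n := i + 1) fun ω ω' h => ?_
  have hnode : homNodeAt u0 ω i = homNodeAt u0 ω' i := by
    cases i with
    | zero => rfl
    | succ i => exact congrArg (·.2.2) (h i (by simp))
  simp only [homRewAt, hnode, h i (Nat.lt_succ_self i)]

end HomingProduct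

section PrefixProbability

variable {T : S → A → S → ℝ} {s0 : S} (lab : A → S → Z) (δu : U → Z → U) (u0 : U)
  {π : List ((A ⊕ Unit) × S) → A ⊕ Unit}
  {πP : List ((A ⊕ Unit) × (S × U)) → A ⊕ Unit}

lemma resetT_nonneg (hT : ∀ s a s', 0 ≤ T s a s') : ∀ s a s', 0 ≤ resetT T s0 s a s'
  | _, Sum.inl _, _ => hT ..
  | _, Sum.inr _, s' => show 0 ≤ if s' = s0 then (1 : ℝ) else 0 by positivity

lemma homT_nextNode (s s' : S) (u : U) (a : A ⊕ Unit) :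
    homT T lab δu s0 u0 (s, u) a (s', nextNode lab δu u0 u a s') = resetT T s0 s a s' := by
  cases a <;> simp [homT, resetT, nextNode]

lemma homT_eq_zero_of_ne_nextNode {p q : S × U} {a : A ⊕ Unit}
    (hq : q.2 ≠ nextNode lab δu u0 p.2 a q.1) : homT T lab δu s0 u0 p a q = 0 := by
  cases a <;> simp_all [homT, nextNode, Prod.ext_iff]

lemma prefixProbAux_homT_liftHistReset (hT : ∀ s a s', 0 ≤ T s a s')
    (l : List ((A ⊕ Unit) × S)) (s : S) (u : U) (past : List ((A ⊕ Unit) × S))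
    (pastP : List ((A ⊕ Unit) × (S × U)))
    (hπ : ∀ h, ValidFrom (resetT T s0) s h →
      πP (pastP ++ liftHistReset lab δu u0 u h) = π (past ++ h)) :
    prefixProbAux (homT T lab δu s0 u0) πP (s, u) pastP (liftHistReset lab δu u0 u l) =
      prefixProbAux (resetT T s0) π s past l := by
  induction l generalizing s u past pastP with
  | nil => rfl
  | cons x l ih =>
    obtain ⟨a, s'⟩ := x
    have hnow : πP pastP = π past := by simpa [liftHistReset] using hπ [] trivial
    rw [liftHistReset_cons, prefixProbAux, prefixProbAux, homT_nextNode, hnow]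
    rcases (resetT_nonneg (s0 := s0) hT s a s').eq_or_lt with h0 | hpos
    · simp [← h0]
    · rw [ih]
      intro h hh
      simpa [liftHistReset_cons] using hπ ((a, s') :: h) ⟨hpos, hh⟩

lemma prefixProbAux_homT_eq_zero (p : S × U) (past : List ((A ⊕ Unit) × (S × U)))
    (l' : List ((A ⊕ Unit) × (S × U)))
    (hl' : l' ∉ Set.range (liftHistReset lab δu u0 p.2)) :
    prefixProbAux (homT T lab δu s0 u0) πP p past l' = 0 := by
  induction l' generalizing p past with
  | nil => exact absurd ⟨[], rfl⟩ hl'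
  | cons y l' ih =>
    obtain ⟨a, q⟩ := y
    simp only [prefixProbAux]
    by_cases hq : q.2 = nextNode lab δu u0 p.2 a q.1
    · have hrest : l' ∉ Set.range (liftHistReset lab δu u0 q.2) := by
        rintro ⟨l, rfl⟩
        exact hl' ⟨(a, q.1) :: l, by simp only [liftHistReset_cons, ← hq]⟩
      rw [ih q _ hrest, mul_zero]
    · rw [homT_eq_zero_of_ne_nextNode lab δu u0 hq, ite_self, zero_mul]

end PrefixProbability

/-- For every strategy `π` for `M↻` and the corresponding
strategy `π^{⊗↻}` for the homing synchronized product `P↻ = M ⊗↻_λ R`,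
the expected mean payoffs coincide. -/
theorem expected_meanPayoff_eq_homing_product
    [Fintype S] [Fintype A] [Fintype U] [Fintype Z]
    (M : NRMDP S A) (null : Z) (lab : A → S → Z) (R : MRM U Z null) (creset : ℝ)
    (π : List ((A ⊕ Unit) × S) → A ⊕ Unit)
    (πP : List ((A ⊕ Unit) × (S × U)) → A ⊕ Unit)
    (hcorr : ∀ h : List ((A ⊕ Unit) × S), ValidFrom (resetT M.T M.s0) M.s0 h →
      πP (liftHistReset lab R.δu R.u0 R.u0 h) = π h)
    (μM : MeasureTheory.Measure (ℕ → (A ⊕ Unit) × S))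
    (μP : MeasureTheory.Measure (ℕ → (A ⊕ Unit) × (S × U)))
    (hμM : IsInduced (resetT M.T M.s0) π M.s0 μM)
    (hμP : IsInduced (homT M.T lab R.δu M.s0 R.u0) πP ((M.s0 : S), (R.u0 : U)) μP) :
    ∫ ω, meanPayoff (rewAtReset lab R.δu R.δr R.u0 creset ω) ∂μM =
      ∫ ω, meanPayoff (homRewAt lab R.δr R.u0 creset ω) ∂μP := by
  obtain ⟨_, hμM⟩ := hμM
  obtain ⟨_, hμP⟩ := hμP
  have hlift := measurable_liftTraj lab R.δu R.u0
  have hμP_eq : μP = μM.map (liftTraj lab R.δu R.u0) := by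
    refine ext_of_cyl fun l' => ?_
    rw [Measure.map_apply hlift (measurableSet_cyl l'), hμP, prefixProb]
    by_cases hl' : l' ∈ Set.range (liftHistReset lab R.δu R.u0 R.u0)
    · obtain ⟨l, rfl⟩ := hl'
      rw [preimage_liftTraj_cyl_liftHistReset, hμM, prefixProb,
        prefixProbAux_homT_liftHistReset lab R.δu R.u0 M.T_nonneg l M.s0 R.u0 [] []
          (by simpa)]
    · rw [preimage_liftTraj_cyl_of_notMem_range lab R.δu R.u0 hl',
        prefixProbAux_homT_eq_zero lab R.δu R.u0 _ [] l' hl', measure_empty,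
        ENNReal.ofReal_zero]
  rw [hμP_eq, integral_map hlift.aemeasurable
    (measurable_meanPayoff (measurable_homRewAt lab R.u0 R.δr creset)).aestronglyMeasurable]
  simp only [homRewAt_liftTraj]
end
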